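/- Let G be a group with finite symmetric generating set S, μ a symmetric probability measure supported on S, H a finite group, and μ̃ = ν*μ*ν on H ≀ G with ν uniform on H. Let A ⊆ G be finite, connected in the Cayley graph, containing e, with outer boundary dA, and let P_A be the substochastic matrix p_A(x,y) = μ(x⁻¹y)·1_{x,y ∈ A}. Then for every function f : G → ℝ supported in A, ν_{A,dA} * f * μ̃ = ν_{A,dA} * (P_A f), where f is identified with the signed measure Σ_x f(x) δ_x on H ≀ G. -/

import Mathlib

/-!
Each `ν_x` is an idempotent and all of them commute, so `W = ν_{A,dA}` satisfies `W * ν_x = W`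
for `x ∈ A` and `W * ν_x = 0` for `x ∈ dA`. Since `δ_x * ν = ν_x * δ_x`, right multiplication by
`ν` of `W * g`, for `g` supported in `A ∪ dA`, just discards the part of `g` outside `A`.
Applying this first to `f` and then to `f * μ`, which is supported in `A S ⊆ A ∪ dA`, turns
`W * f * ν * μ * ν` into `W * (f * μ)|_A`, and by the symmetry of `μ` the restriction
`(f * μ)|_A` is `P_A f`.
-/

open Function MonoidAlgebra
open scoped Classical
set_option linter.unusedSectionVars false

noncomputable section

variable (G H : Type) [Group G] [Group H] [Fintype H]

/-- The automorphism `L_g` of the full group of configurations `G → H`,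
`(L_g η)(x) = η (g⁻¹ x)`. -/
def lampAut (g : G) : (G → H) ≃* (G → H) where
  toFun η := fun x => η (g⁻¹ * x)
  invFun η := fun x => η (g * x)
  left_inv η := by funext x; simp [← mul_assoc]
  right_inv η := by funext x; simp [← mul_assoc]
  map_mul' η η' := rfl

/-- The action homomorphism `G →* MulAut (G → H)`. -/
def lampHom : G →* MulAut (G → H) where
  toFun := lampAut G H
  map_one' := by ext η x; simp [lampAut]
  map_mul' g₁ g₂ := by ext η x; simp [lampAut, MulAut.mul_apply, mul_assoc]

/-- The unrestricted wreath product `(H^G) ⋊ G`. -/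
abbrev WrFull := (G → H) ⋊[lampHom G H] G

/-- The (restricted) wreath product `H ≀ G = (⊕_G H) ⋊ G`, realized as the
subgroup of the unrestricted wreath product consisting of the elements whose
configuration has finite support. -/
def Wreath : Subgroup (WrFull G H) where
  carrier := {w | (mulSupport w.left).Finite}
  one_mem' := by
    simp only [Set.mem_setOf_eq, SemidirectProduct.one_left]
    simp [mulSupport]
  mul_mem' := by
    intro a b ha hb
    simp only [Set.mem_setOf_eq, SemidirectProduct.mul_left] at *
    refine (ha.union ?_).subset (mulSupport_mul _ _)
    have : mulSupport (lampHom G H a.right b.left) =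
        (fun x => (a.right)⁻¹ * x) ⁻¹' mulSupport b.left := by
      ext x
      simp [lampHom, lampAut, mulSupport]
    rw [this]
    exact hb.preimage (by
      intro x _ y _ h
      simpa using mul_left_cancel h)
  inv_mem' := by
    intro a ha
    simp only [Set.mem_setOf_eq, SemidirectProduct.inv_left] at *
    have : mulSupport (lampHom G H (a.right)⁻¹ (a.left)⁻¹) =
        (fun x => a.right * x) ⁻¹' mulSupport a.left := by
      ext x
      simp [lampHom, lampAut, mulSupport]
    rw [this]
    exact ha.preimage (by
      intro x _ y _ h
      simpa using mul_left_cancel h)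

/-- The configuration which has state `h` at the point `g` and is trivial
elsewhere. -/
def pointConf (g : G) (h : H) : G → H := fun x => if x = g then h else 1

lemma pointConf_finite (g : G) (h : H) : (mulSupport (pointConf G H g h)).Finite := by
  apply (Set.finite_singleton g).subset
  intro x hx
  by_contra hxg
  simp only [Set.mem_singleton_iff] at hxg
  simp [mulSupport, pointConf, hxg] at hx

/-- A finitely supported configuration together with a position, as an
element of the wreath product. -/
def wr (η : G → H) (hη : (mulSupport η).Finite) (g : G) : Wreath G H :=
  ⟨⟨η, g⟩, hη⟩

/-- The embedding of the base group `G` in the wreath product, `g ↦ (1, g)`. -/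
def embG (g : G) : Wreath G H :=
  wr G H 1 (by simp [mulSupport]) g

/-- The embedding of the lamp group `H` in the wreath product,
`h ↦ (η_e^h, e)`. -/
def embH (h : H) : Wreath G H :=
  wr G H (pointConf G H 1 h) (pointConf_finite G H 1 h) 1

/-- The point mass `δ_g` at the embedded element `g ∈ G`, as an element of the
group algebra of the wreath product. -/
def deltaG (g : G) : MonoidAlgebra ℝ (Wreath G H) :=
  MonoidAlgebra.single (embG G H g) 1

/-- The uniform probability measure `ν` on the embedded copy of `H` inside the
wreath product. -/
def nu : MonoidAlgebra ℝ (Wreath G H) :=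
  ∑ h : H, MonoidAlgebra.single (embH G H h) ((Fintype.card H : ℝ)⁻¹)

/-- The translated uniform measure `ν_g = δ_g * ν * δ_{g⁻¹}`. -/
def nuAt (g : G) : MonoidAlgebra ℝ (Wreath G H) :=
  deltaG G H g * nu G H * deltaG G H g⁻¹

/-- The complementary projection `ν̄_g = δ_{(1,e)} - ν_g`. -/
def nuBarAt (g : G) : MonoidAlgebra ℝ (Wreath G H) :=
  1 - nuAt G H g

end

/-- The Cayley graph of `G` with respect to `S` (for symmetric `S` the second
condition in the adjacency is redundant). -/
def cayley (G : Type) [Group G] (S : Finset G) : SimpleGraph G where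
  Adj x y := x ≠ y ∧ x⁻¹ * y ∈ S ∧ y⁻¹ * x ∈ S
  symm := ⟨by
    intro x y h
    exact ⟨h.1.symm, h.2.2, h.2.1⟩⟩
  loopless := ⟨fun x h => h.1 rfl⟩

/-- The outer vertex boundary of the finite set `A` in the Cayley graph of `G`
with respect to the (symmetric) set `S`: all vertices outside `A` with a
neighbour in `A`. -/
noncomputable def cayleyBoundary (G : Type) [Group G] (S A : Finset G) : Finset G :=
  (A.biUnion fun x => S.image fun s => x * s).filter (· ∉ A)

section IdempotentProduct

variable {R ι : Type*} [MonoidWithZero R] {e e' : ι → R} {A D : Finset ι}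
  (hA : (A : Set ι).Pairwise fun i j => Commute (e i) (e j))
  (hD : (D : Set ι).Pairwise fun i j => Commute (e' i) (e' j))

theorem noncommProd_mul_noncommProd_mul_of_mem_left {i : ι} (hi : i ∈ A)
    (he : IsIdempotentElem (e i)) (hee' : ∀ j ∈ D, Commute (e i) (e' j)) :
    A.noncommProd e hA * D.noncommProd e' hD * e i = A.noncommProd e hA * D.noncommProd e' hD := by
  have hcomm : Commute (D.noncommProd e' hD) (e i) :=
    (Finset.noncommProd_commute _ _ _ _ hee').symm
  rw [mul_assoc, hcomm.eq, ← mul_assoc]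
  congr 1
  rw [← Finset.noncommProd_erase_mul A hi e hA, mul_assoc, he.eq]

theorem noncommProd_mul_noncommProd_mul_of_mem_right {i : ι} (hi : i ∈ D)
    (h0 : e' i * e i = 0) :
    A.noncommProd e hA * D.noncommProd e' hD * e i = 0 := by
  rw [mul_assoc, ← Finset.noncommProd_erase_mul D hi e' hD, mul_assoc, h0, mul_zero, mul_zero]

end IdempotentProduct

noncomputable section WreathAlgebra

variable {G H : Type} [Group G] [Group H] [Fintype H]

theorem embG_mul (g g' : G) : embG G H g * embG G H g' = embG G H (g * g') := by
  apply Subtype.ext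
  apply SemidirectProduct.ext <;> simp [embG, wr]

variable (G H) in
def embGHom : G →* Wreath G H where
  toFun := embG G H
  map_one' := by
    apply Subtype.ext
    apply SemidirectProduct.ext <;> simp [embG, wr]
  map_mul' g g' := (embG_mul g g').symm

theorem mapDomainRingHom_embGHom_single (x : G) (r : ℝ) :
    mapDomainRingHom ℝ (embGHom G H) (single x r) = r • deltaG G H x := by
  rw [deltaG, smul_single', mul_one]
  exact mapDomain_single

theorem deltaG_mul (g g' : G) : deltaG G H g * deltaG G H g' = deltaG G H (g * g') := by
  rw [deltaG, deltaG, single_mul_single, embG_mul, one_mul]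
  rfl

theorem deltaG_one : deltaG G H (1 : G) = 1 := by
  rw [deltaG, one_def]
  exact congrArg (single · 1) (map_one (embGHom G H))

def lampElt (g : G) (h : H) : Wreath G H :=
  wr G H (pointConf G H g h) (pointConf_finite G H g h) 1

theorem embG_mul_embH_mul_embG_inv (g : G) (h : H) :
    embG G H g * embH G H h * embG G H g⁻¹ = lampElt g h := by
  apply Subtype.ext
  apply SemidirectProduct.ext
  · show (1 * lampHom G H g (pointConf G H 1 h)) * lampHom G H (g * 1) 1 = _
    funext x
    simp [lampHom, lampAut, pointConf, lampElt, wr, inv_mul_eq_one, eq_comm]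
  · show g * 1 * g⁻¹ = 1
    group

theorem lampElt_mul (g : G) (h h' : H) :
    lampElt g h * lampElt g h' = lampElt g (h * h') := by
  apply Subtype.ext
  apply SemidirectProduct.ext
  · show pointConf G H g h * lampHom G H 1 (pointConf G H g h') = _
    rw [map_one]
    funext x
    by_cases hx : x = g <;> simp [pointConf, lampElt, wr, hx]
  · show (1 : G) * 1 = 1
    simp

theorem lampElt_commute {x y : G} (hxy : x ≠ y) (h h' : H) :
    Commute (lampElt x h) (lampElt y h') := by
  apply Subtype.ext
  apply SemidirectProduct.ext
  · show pointConf G H x h * lampHom G H 1 (pointConf G H y h') =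
      pointConf G H y h' * lampHom G H 1 (pointConf G H x h)
    rw [map_one]
    funext z
    show pointConf G H x h z * pointConf G H y h' z = pointConf G H y h' z * pointConf G H x h z
    by_cases hzx : z = x
    · subst hzx
      simp [pointConf, hxy]
    · by_cases hzy : z = y <;> simp [pointConf, hzx, hzy, hxy.symm]
  · rfl

theorem single_embH_mul_nu (h : H) : single (embH G H h) 1 * nu G H = nu G H := by
  rw [nu, Finset.mul_sum]
  refine Fintype.sum_bijective (h * ·) (Group.mulLeft_bijective h) _ _ fun h' => ?_
  rw [single_mul_single, one_mul]
  exact congrArg (single · _) (lampElt_mul 1 h h')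

theorem isIdempotentElem_nu : IsIdempotentElem (nu G H) := by
  have hcard : (Fintype.card H : ℝ) ≠ 0 := Nat.cast_ne_zero.2 Fintype.card_ne_zero
  calc nu G H * nu G H
      = ∑ h : H, (Fintype.card H : ℝ)⁻¹ • (single (embH G H h) 1 * nu G H) := by
        nth_rewrite 1 [nu]
        rw [Finset.sum_mul]
        refine Finset.sum_congr rfl fun h _ => ?_
        rw [← smul_mul_assoc, smul_single', mul_one]
    _ = nu G H := by
        rw [Finset.sum_congr rfl fun h _ => congrArg _ (single_embH_mul_nu h), Finset.sum_const,
          Finset.card_univ, ← Nat.cast_smul_eq_nsmul ℝ, smul_smul, mul_inv_cancel₀ hcard, one_smul]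

theorem nuAt_eq_sum (g : G) :
    nuAt G H g = ∑ h : H, single (lampElt g h) (Fintype.card H : ℝ)⁻¹ := by
  rw [nuAt, nu, Finset.mul_sum, Finset.sum_mul]
  refine Finset.sum_congr rfl fun h _ => ?_
  rw [deltaG, deltaG, single_mul_single, single_mul_single, embG_mul_embH_mul_embG_inv, one_mul,
    mul_one]

theorem nuAt_commute (x y : G) : Commute (nuAt G H x) (nuAt G H y) := by
  rcases eq_or_ne x y with rfl | hxy
  · exact Commute.refl _
  rw [nuAt_eq_sum, nuAt_eq_sum]
  refine Commute.sum_left _ _ _ fun h _ => Commute.sum_right _ _ _ fun h' _ => ?_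
  rw [commute_iff_eq, single_mul_single, single_mul_single, (lampElt_commute hxy h h').eq]

theorem isIdempotentElem_nuAt (g : G) : IsIdempotentElem (nuAt G H g) := by
  calc nuAt G H g * nuAt G H g
      = deltaG G H g * nu G H * (deltaG G H g⁻¹ * deltaG G H g) * nu G H * deltaG G H g⁻¹ := by
        simp only [nuAt, mul_assoc]
    _ = nuAt G H g := by
        rw [deltaG_mul, inv_mul_cancel, deltaG_one, mul_one, mul_assoc (deltaG G H g) (nu G H),
          isIdempotentElem_nu.eq, nuAt]

theorem deltaG_mul_nu (g : G) : deltaG G H g * nu G H = nuAt G H g * deltaG G H g := by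
  rw [nuAt, mul_assoc, deltaG_mul, inv_mul_cancel, deltaG_one, mul_one]

theorem commute_nuAt_nuBarAt (x y : G) : Commute (nuAt G H x) (nuBarAt G H y) :=
  (Commute.one_right _).sub_right (nuAt_commute x y)

theorem nuBarAt_mul_nuAt (g : G) : nuBarAt G H g * nuAt G H g = 0 := by
  rw [nuBarAt, sub_mul, one_mul, (isIdempotentElem_nuAt g).eq, sub_self]

theorem mul_mapDomainRingHom_mul_nu {W : MonoidAlgebra ℝ (Wreath G H)} {A D : Finset G}
    (hWA : ∀ x ∈ A, W * nuAt G H x = W) (hWD : ∀ x ∈ D, W * nuAt G H x = 0)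
    {g : MonoidAlgebra ℝ G} (hg : g.coeff.support ⊆ A ∪ D) :
    W * mapDomainRingHom ℝ (embGHom G H) g * nu G H =
      W * mapDomainRingHom ℝ (embGHom G H) (ofCoeff (g.coeff.filter (· ∈ A))) := by
  set ι := mapDomainRingHom ℝ (embGHom G H)
  have hsingle : ∀ x ∈ g.coeff.support, W * ι (single x (g.coeff x)) * nu G H =
      if x ∈ A then W * ι (single x (g.coeff x)) else 0 := by
    intro x hx
    rw [mapDomainRingHom_embGHom_single, mul_smul_comm, smul_mul_assoc, mul_assoc,
      deltaG_mul_nu, ← mul_assoc]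
    split_ifs with hxA
    · rw [hWA x hxA]
    · have hxD : x ∈ D := (Finset.mem_union.1 (hg hx)).resolve_left hxA
      rw [hWD x hxD, zero_mul, smul_zero]
  calc W * ι g * nu G H = ∑ x ∈ g.coeff.support, W * ι (single x (g.coeff x)) * nu G H := by
        conv_lhs => rw [← sum_coeff_single g]
        rw [Finsupp.sum, map_sum, Finset.mul_sum, Finset.sum_mul]
    _ = ∑ x ∈ g.coeff.support with x ∈ A, W * ι (single x (g.coeff x)) := by
        rw [Finset.sum_congr rfl hsingle, Finset.sum_filter]
    _ = W * ι (ofCoeff (g.coeff.filter (· ∈ A))) := by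
        rw [Finsupp.filter_eq_sum, ofCoeff_sum, map_sum, Finset.mul_sum]
        rfl

end WreathAlgebra

theorem MonoidAlgebra.sum_single_sum_coeff_inv_mul_eq_filter_mul {k G : Type*} [CommSemiring k]
    [Group G] {A : Finset G} {μ f : MonoidAlgebra k G} (hμ : ∀ g, μ.coeff g⁻¹ = μ.coeff g)
    (hf : f.coeff.support ⊆ A) :
    ∑ x ∈ A, single x (∑ y ∈ A, μ.coeff (x⁻¹ * y) * f.coeff y) =
      ofCoeff ((f * μ).coeff.filter (· ∈ A)) := by
  ext x
  rw [coeff_sum, Finset.sum_apply', coeff_ofCoeff, Finsupp.filter_apply]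
  simp only [coeff_single, Finsupp.single_apply, Finset.sum_ite_eq', coeff_mul_apply_left]
  split_ifs with hx
  · rw [Finsupp.sum_of_support_subset f.coeff hf (fun y r => r * μ.coeff (y⁻¹ * x))
      fun _ _ => zero_mul _]
    refine Finset.sum_congr rfl fun y _ => ?_
    rw [mul_comm, ← hμ, mul_inv_rev, inv_inv]
  · rfl

theorem mul_mem_union_cayleyBoundary {G : Type} [Group G] {S A : Finset G} {x s : G}
    (hx : x ∈ A) (hs : s ∈ S) : x * s ∈ A ∪ cayleyBoundary G S A := by
  by_cases hxs : x * s ∈ A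
  · exact Finset.mem_union_left _ hxs
  · refine Finset.mem_union_right _ (Finset.mem_filter.2 ⟨?_, hxs⟩)
    exact Finset.mem_biUnion.2 ⟨x, hx, Finset.mem_image.2 ⟨s, hs, rfl⟩⟩

theorem invariance_lemma_general (G H : Type) [Group G] [Group H] [Fintype H]
    (S : Finset G)
    (μ : MonoidAlgebra ℝ G)
    (hμsupp : ↑μ.coeff.support ⊆ (S : Set G)) (hμsym : ∀ g : G, μ.coeff g⁻¹ = μ.coeff g)
    (A : Finset G)
    (hcA : (A : Set G).Pairwise fun a b => Commute (nuAt G H a) (nuAt G H b))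
    (hcdA : ((cayleyBoundary G S A : Finset G) : Set G).Pairwise
      fun a b => Commute (nuBarAt G H a) (nuBarAt G H b))
    (f : MonoidAlgebra ℝ G) (hf : ↑f.coeff.support ⊆ (A : Set G)) :
    (A.noncommProd (nuAt G H) hcA *
        (cayleyBoundary G S A).noncommProd (nuBarAt G H) hcdA) *
      (show MonoidAlgebra ℝ (Wreath G H) from MonoidAlgebra.ofCoeff (Finsupp.mapDomain (embG G H) f.coeff)) *
      (nu G H * (show MonoidAlgebra ℝ (Wreath G H) from
          MonoidAlgebra.ofCoeff (Finsupp.mapDomain (embG G H) μ.coeff)) * nu G H)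
    = (A.noncommProd (nuAt G H) hcA *
        (cayleyBoundary G S A).noncommProd (nuBarAt G H) hcdA) *
      (show MonoidAlgebra ℝ (Wreath G H) from MonoidAlgebra.ofCoeff (Finsupp.mapDomain (embG G H)
        (∑ x ∈ A, MonoidAlgebra.single x (∑ y ∈ A, μ.coeff (x⁻¹ * y) * f.coeff y)).coeff)) := by
  set W := A.noncommProd (nuAt G H) hcA * (cayleyBoundary G S A).noncommProd (nuBarAt G H) hcdA
  set ι := mapDomainRingHom ℝ (embGHom G H)
  have hWA : ∀ x ∈ A, W * nuAt G H x = W := fun x hx =>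
    noncommProd_mul_noncommProd_mul_of_mem_left hcA hcdA hx (isIdempotentElem_nuAt x)
      fun y _ => commute_nuAt_nuBarAt x y
  have hWD : ∀ x ∈ cayleyBoundary G S A, W * nuAt G H x = 0 := fun x hx =>
    noncommProd_mul_noncommProd_mul_of_mem_right hcA hcdA hx (nuBarAt_mul_nuAt x)
  have hfA : f.coeff.support ⊆ A := Finset.coe_subset.1 hf
  have hfμ : (f * μ).coeff.support ⊆ A ∪ cayleyBoundary G S A := by
    refine (support_coeff_mul_subset f μ).trans fun z hz => ?_
    obtain ⟨x, hx, s, hs, rfl⟩ := Finset.mem_mul.1 hz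
    exact mul_mem_union_cayleyBoundary (hfA hx) (hμsupp hs)
  change W * ι f * (nu G H * ι μ * nu G H) = W * ι (∑ x ∈ A, _)
  calc W * ι f * (nu G H * ι μ * nu G H) = W * ι f * nu G H * ι μ * nu G H := by
        simp only [mul_assoc]
    _ = W * ι (f * μ) * nu G H := by
        rw [mul_mapDomainRingHom_mul_nu hWA hWD (hfA.trans Finset.subset_union_left),
          (Finsupp.filter_eq_self_iff _ _).2 fun x hx => hfA (Finsupp.mem_support_iff.2 hx), map_mul,
          mul_assoc W]
    _ = W * ι (ofCoeff ((f * μ).coeff.filter (· ∈ A))) := mul_mapDomainRingHom_mul_nu hWA hWD hfμ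
    _ = W * ι (∑ x ∈ A, single x (∑ y ∈ A, μ.coeff (x⁻¹ * y) * f.coeff y)) := by
        rw [sum_single_sum_coeff_inv_mul_eq_filter_mul hμsym hfA]

/-- (Invariance lemma.)  Let `μ` be a symmetric probability
measure supported on the finite symmetric generating set `S`,
`μ̃ = ν * μ * ν` on `H ≀ G`, and let `A ∋ e` be a finite connected subset of the
Cayley graph with outer boundary `dA`.  Then for every `f : G → ℝ` supported
in `A`, viewed as an element of the group algebra of `H ≀ G`,
`ν_{A,dA} * f * μ̃ = ν_{A,dA} * (P_A f)`,
where `P_A f (x) = ∑_{y ∈ A} μ(x⁻¹ y) f(y)` for `x ∈ A`. -/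
theorem invariance_lemma (G H : Type) [Group G] [Group H] [Fintype H]
    (S : Finset G) (hS : ∀ s ∈ S, s⁻¹ ∈ S)
    (μ : MonoidAlgebra ℝ G) (hμpos : ∀ g : G, 0 ≤ μ.coeff g)
    (hμsupp : ↑μ.coeff.support ⊆ (S : Set G)) (hμsym : ∀ g : G, μ.coeff g⁻¹ = μ.coeff g)
    (hμprob : ∑ g ∈ μ.coeff.support, μ.coeff g = 1)
    (A : Finset G) (h1A : (1 : G) ∈ A)
    (hAconn : ((cayley G S).induce (A : Set G)).Connected)
    (hcA : (A : Set G).Pairwise fun a b => Commute (nuAt G H a) (nuAt G H b))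
    (hcdA : ((cayleyBoundary G S A : Finset G) : Set G).Pairwise
      fun a b => Commute (nuBarAt G H a) (nuBarAt G H b))
    (f : MonoidAlgebra ℝ G) (hf : ↑f.coeff.support ⊆ (A : Set G)) :
    (A.noncommProd (nuAt G H) hcA *
        (cayleyBoundary G S A).noncommProd (nuBarAt G H) hcdA) *
      (show MonoidAlgebra ℝ (Wreath G H) from MonoidAlgebra.ofCoeff (Finsupp.mapDomain (embG G H) f.coeff)) *
      (nu G H * (show MonoidAlgebra ℝ (Wreath G H) from
          MonoidAlgebra.ofCoeff (Finsupp.mapDomain (embG G H) μ.coeff)) * nu G H)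
    = (A.noncommProd (nuAt G H) hcA *
        (cayleyBoundary G S A).noncommProd (nuBarAt G H) hcdA) *
      (show MonoidAlgebra ℝ (Wreath G H) from MonoidAlgebra.ofCoeff (Finsupp.mapDomain (embG G H)
        (∑ x ∈ A, MonoidAlgebra.single x (∑ y ∈ A, μ.coeff (x⁻¹ * y) * f.coeff y)).coeff)) :=
  invariance_lemma_general G H S μ hμsupp hμsym A hcA hcdA f hf
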